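/- arXiv:1909.08920 — 7 statements merged into one kernel-verified Lean document; each statement's English description precedes it below -/
import Mathlib

section
/- The map S ↦ (b(a,S))_{a ≠ a₁}, sending a set S ∈ Δ to the vector of most preferred remaining items of the n−1 non-manipulators, is injective on Δ; consequently |Δ| ≤ m^{n−1}. -/
/-! The sets `S ∈ Δ` are fixed points of `S ↦ ⋃_{a ≠ a₁} D(a, b(a,S))`, so each of them is
recovered from the best remaining items of the non-manipulators. Choosing these items gives an
injection of `Δ` into `{a // a ≠ a₁} → I`, a set of size `m ^ (n - 1)`. -/

/-- Items are `Fin m`; a ranking is a bijection `Fin m ≃ Fin m`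
(`rk i` is the rank of item `i`; lower rank = more preferred).
`IsBest rk S b` says that `b` is the item of `I ∖ S` with minimum rank,
i.e. `b = b(a, S)` for an agent with ranking `rk`. -/
def IsBest {m : ℕ} (rk : Fin m ≃ Fin m) (S : Finset (Fin m)) (b : Fin m) : Prop :=
  b ∉ S ∧ ∀ j ∉ S, rk b ≤ rk j

/-- `D rk i` : the set of items strictly preferred to `i` under the ranking `rk`. -/
def D {m : ℕ} (rk : Fin m ≃ Fin m) (i : Fin m) : Finset (Fin m) :=
  Finset.univ.filter fun j => rk j < rk i

/-- `Δ` : the family of proper subsets `S ⊊ I` with `⋃_{a ≠ a₁} D(a, b(a,S)) = S`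
(here `b : A → Fin m` denotes the vector of best remaining items `a ↦ b(a,S)`,
which is uniquely determined by the `IsBest` condition). -/
def Delta {A : Type*} {m : ℕ} (a₁ : A) (rk : A → Fin m ≃ Fin m) :
    Set (Finset (Fin m)) :=
  {S | S ⊂ Finset.univ ∧ ∀ b : A → Fin m, (∀ a, IsBest (rk a) S (b a)) →
    {j : Fin m | ∃ a, a ≠ a₁ ∧ j ∈ D (rk a) (b a)} = ↑S}

lemma exists_isBest {m : ℕ} (rk : Fin m ≃ Fin m) {S : Finset (Fin m)}
    (hS : S ⊂ Finset.univ) : ∃ b, IsBest rk S b := by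
  obtain ⟨x, -, hx⟩ := Finset.exists_of_ssubset hS
  obtain ⟨b, hb, hmin⟩ := Sᶜ.exists_min_image rk ⟨x, Finset.mem_compl.mpr hx⟩
  exact ⟨b, Finset.mem_compl.mp hb, fun j hj => hmin j (Finset.mem_compl.mpr hj)⟩

namespace Delta

variable {A : Type*} {m : ℕ} {a₁ : A} {rk : A → Fin m ≃ Fin m}

theorem eq_of_isBest_eq {S S' : Finset (Fin m)} (hS : S ∈ Delta a₁ rk)
    (hS' : S' ∈ Delta a₁ rk) {b b' : A → Fin m} (hb : ∀ a, IsBest (rk a) S (b a))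
    (hb' : ∀ a, IsBest (rk a) S' (b' a)) (hbb' : ∀ a, a ≠ a₁ → b a = b' a) : S = S' := by
  have hunion : {j : Fin m | ∃ a, a ≠ a₁ ∧ j ∈ D (rk a) (b a)} =
      {j : Fin m | ∃ a, a ≠ a₁ ∧ j ∈ D (rk a) (b' a)} := by
    ext j
    exact exists_congr fun a => and_congr_right fun ha => by rw [hbb' a ha]
  exact Finset.coe_injective ((hS.2 b hb).symm.trans (hunion.trans (hS'.2 b' hb')))

theorem ncard_le [Fintype A] (a₁ : A) (rk : A → Fin m ≃ Fin m) :
    (Delta a₁ rk).ncard ≤ m ^ (Fintype.card A - 1) := by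
  choose best hbest using fun (S : Delta a₁ rk) a => exists_isBest (rk a) S.2.1
  have hinj : Function.Injective fun (S : Delta a₁ rk) (a : {a // a ≠ a₁}) => best S a := by
    intro S S' h
    exact Subtype.ext <| eq_of_isBest_eq S.2 S'.2 (hbest S) (hbest S')
      fun a ha => congrFun h ⟨a, ha⟩
  calc (Delta a₁ rk).ncard = Nat.card (Delta a₁ rk) := (Nat.card_coe_set_eq _).symm
    _ ≤ Nat.card ({a // a ≠ a₁} → Fin m) := Nat.card_le_card_of_injective _ hinj
    _ = m ^ (Fintype.card A - 1) := by
      classical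
      rw [Nat.card_fun, Nat.card_eq_fintype_card, Nat.card_eq_fintype_card, Fintype.card_fin]
      exact congrArg _ (Set.card_ne_eq a₁)

end Delta

/-- the map `S ↦ (b(a,S))_{a ≠ a₁}` is injective on `Δ`;
consequently `|Δ| ≤ m ^ (n - 1)` where `n` is the number of agents. -/
theorem statement2 {A : Type*} [Fintype A] {m : ℕ} (a₁ : A)
    (rk : A → Fin m ≃ Fin m) :
    (∀ S ∈ Delta a₁ rk, ∀ S' ∈ Delta a₁ rk,
      ∀ b b' : A → Fin m,
        (∀ a, IsBest (rk a) S (b a)) → (∀ a, IsBest (rk a) S' (b' a)) →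
        (∀ a, a ≠ a₁ → b a = b' a) → S = S') ∧
    (Delta a₁ rk).ncard ≤ m ^ (Fintype.card A - 1) :=
  ⟨fun _ hS _ hS' _ _ hb hb' hbb' => Delta.eq_of_isBest_eq hS hS' hb hb' hbb',
    Delta.ncard_le a₁ rk⟩
end

section
/- Every DP state (k,S) that is reachable from the initial state (0,∅) by iterating the DP transitions and that satisfies S ⊊ I has S ∈ Δ. -/
/-- The DP transition relation on states `(k, S)`.  The picking sequence `π`
is 0-indexed (`π t` is the picker of time step `t + 1`), so the next picker
from state `(k, S)` is `π (|S| + k)`.  If the next picker is the manipulator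
`a₁`, the unique successor is `(k + 1, S)`; otherwise, with `b = b(a, S)` the
best remaining item of the picker `a`, the successors are `(k, S ∪ {b})` and,
when `k ≥ 1`, `(k - 1, S ∪ {b})`. -/
def DPStep {A : Type*} {m : ℕ} (π : ℕ → A) (rk : A → Fin m ≃ Fin m) (a₁ : A)
    (s s' : ℕ × Finset (Fin m)) : Prop :=
  s.2.card + s.1 < m ∧
    ((π (s.2.card + s.1) = a₁ ∧ s' = (s.1 + 1, s.2)) ∨
      (π (s.2.card + s.1) ≠ a₁ ∧
        ∃ b : Fin m, IsBest (rk (π (s.2.card + s.1))) s.2 b ∧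
          (s' = (s.1, insert b s.2) ∨ (1 ≤ s.1 ∧ s' = (s.1 - 1, insert b s.2)))))

/-!
Along any DP path, every item already taken by the other agents is preferred, by some
non-manipulator agent, to every item still available: a newly taken item is the taker's
best remaining item, and the invariant is preserved for the old items because the set of
available items only shrinks. For such an `S`, each `j ∈ S` lies in `D(a, b(a, S))` for that
agent `a`, while no item outside `S` is preferred by anyone to their best available item.
-/

def IsPreferredByOthers {A : Type*} {m : ℕ} (a₁ : A) (rk : A → Fin m ≃ Fin m)
    (S : Finset (Fin m)) : Prop :=
  ∀ j ∈ S, ∃ a, a ≠ a₁ ∧ ∀ i ∉ S, rk a j < rk a i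

section

variable {A : Type*} {m : ℕ} {π : ℕ → A} {a₁ : A} {rk : A → Fin m ≃ Fin m}

theorem IsBest.lt_of_notMem_insert {r : Fin m ≃ Fin m} {S : Finset (Fin m)} {b i : Fin m}
    (hb : IsBest r S b) (hi : i ∉ insert b S) : r b < r i := by
  rw [Finset.mem_insert, not_or] at hi
  exact (hb.2 i hi.2).lt_of_ne (r.injective.ne (Ne.symm hi.1))

theorem isPreferredByOthers_empty : IsPreferredByOthers a₁ rk ∅ := by
  simp [IsPreferredByOthers]

theorem IsPreferredByOthers.insert_best {S : Finset (Fin m)} {a : A} {b : Fin m}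
    (hS : IsPreferredByOthers a₁ rk S) (ha : a ≠ a₁) (hb : IsBest (rk a) S b) :
    IsPreferredByOthers a₁ rk (insert b S) := by
  intro j hj
  rcases Finset.mem_insert.mp hj with rfl | hj
  · exact ⟨a, ha, fun i hi => hb.lt_of_notMem_insert hi⟩
  · obtain ⟨a', ha', hlt⟩ := hS j hj
    exact ⟨a', ha', fun i hi => hlt i fun h => hi (Finset.mem_insert_of_mem h)⟩

theorem DPStep.snd_eq_or_eq_insert_best {s s' : ℕ × Finset (Fin m)}
    (h : DPStep π rk a₁ s s') :
    s'.2 = s.2 ∨ ∃ a, a ≠ a₁ ∧ ∃ b, IsBest (rk a) s.2 b ∧ s'.2 = insert b s.2 := by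
  obtain ⟨-, ⟨-, rfl⟩ | ⟨hne, b, hb, rfl | ⟨-, rfl⟩⟩⟩ := h
  · exact Or.inl rfl
  all_goals exact Or.inr ⟨_, hne, b, hb, rfl⟩

theorem isPreferredByOthers_of_reflTransGen {s : ℕ × Finset (Fin m)}
    (h : Relation.ReflTransGen (DPStep π rk a₁) (0, ∅) s) : IsPreferredByOthers a₁ rk s.2 := by
  induction h with
  | refl => exact isPreferredByOthers_empty
  | tail _ step ih =>
    obtain heq | ⟨a, ha, b, hb, heq⟩ := step.snd_eq_or_eq_insert_best
    · exact heq ▸ ih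
    · exact heq ▸ ih.insert_best ha hb

theorem IsPreferredByOthers.mem_delta {S : Finset (Fin m)} (h : IsPreferredByOthers a₁ rk S)
    (hS : S ⊂ Finset.univ) : S ∈ Delta a₁ rk := by
  refine ⟨hS, fun b hb => Set.ext fun j => ⟨?_, fun hj => ?_⟩⟩
  · rintro ⟨a, -, hj⟩
    by_contra hjS
    exact (Finset.mem_filter.mp hj).2.not_ge ((hb a).2 j hjS)
  · obtain ⟨a, ha, hlt⟩ := h j hj
    exact ⟨a, ha, Finset.mem_filter.mpr ⟨Finset.mem_univ _, hlt (b a) (hb a).1⟩⟩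

end

/-- every DP state `(k, S)` reachable from the initial state `(0, ∅)`
with `S ⊊ I` has `S ∈ Δ`. -/
theorem statement3 {A : Type*} {m : ℕ} (π : ℕ → A) (a₁ : A)
    (rk : A → Fin m ≃ Fin m) (k : ℕ) (S : Finset (Fin m))
    (hreach : Relation.ReflTransGen (DPStep π rk a₁) (0, ∅) (k, S))
    (hS : S ⊂ Finset.univ) :
    S ∈ Delta a₁ rk :=
  (isPreferredByOthers_of_reflTransGen hreach).mem_delta hS
end

section
/- Let S^{−a₁}_s denote the set of items picked after s steps when the allocation process is run with the picking sequence obtained from π by deleting all occurrences of a₁ (all remaining agents picking truthfully). Then for every ranking ≻ reported by the manipulator a₁ and every time step t ≤ m, the set S^{−a₁}_{t−μ(a₁,t)} is contained in the set of items picked during the first t steps of the allocation process under report ≻. -/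
/-- One step of the sequential allocation process: an agent with ranking `rk`
(a bijection `Fin m ≃ Fin m`, lower rank = more preferred) greedily picks the
lowest-rank item among the remaining ones (the complement of the already
picked set `S`); if nothing is left, nothing happens. -/
def pickStep {m : ℕ} (rk : Fin m ≃ Fin m) (S : Finset (Fin m)) : Finset (Fin m) :=
  S ∪ Sᶜ.filter fun i => ∀ j ∈ Sᶜ, rk i ≤ rk j

/-- `pickedSeq rpt π` : the set of items picked after running the sequential
allocation process along the (finite) picking sequence `π`, where agent `a`
reports the ranking `rpt a`.  The set picked after the first `t` steps is
`pickedSeq rpt (π.take t)`. -/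
def pickedSeq {A : Type*} {m : ℕ} (rpt : A → Fin m ≃ Fin m) (π : List A) :
    Finset (Fin m) :=
  π.foldl (fun S a => pickStep (rpt a) S) ∅

lemma subset_pickStep {m : ℕ} (rk : Fin m ≃ Fin m) (S : Finset (Fin m)) :
    S ⊆ pickStep rk S :=
  Finset.subset_union_left

lemma pickStep_mono {m : ℕ} (rk : Fin m ≃ Fin m) {S T : Finset (Fin m)} (h : S ⊆ T) :
    pickStep rk S ⊆ pickStep rk T := by
  intro x hx
  rcases Finset.mem_union.1 hx with hx | hx
  · exact Finset.mem_union_left _ (h hx)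
  · rw [Finset.mem_filter] at hx
    by_cases hxT : x ∈ T
    · exact Finset.mem_union_left _ hxT
    · refine Finset.mem_union_right _ (Finset.mem_filter.2 ⟨Finset.mem_compl.2 hxT, ?_⟩)
      intro j hj
      exact hx.2 j (Finset.mem_compl.2 fun hjS => Finset.mem_compl.1 hj (h hjS))

lemma pickedSeq_append {A : Type*} {m : ℕ} (rpt : A → Fin m ≃ Fin m) (L : List A) (a : A) :
    pickedSeq rpt (L ++ [a]) = pickStep (rpt a) (pickedSeq rpt L) := by
  simp [pickedSeq, List.foldl_append]

lemma statement5_core {A : Type*} [DecidableEq A] {m : ℕ} (a₁ : A) (rk : A → Fin m ≃ Fin m)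
    (r : Fin m ≃ Fin m) (L : List A) :
    pickedSeq rk (L.filter fun a => decide (a ≠ a₁)) ⊆
      pickedSeq (Function.update rk a₁ r) L := by
  induction L using List.reverseRecOn with
  | nil => exact subset_rfl
  | append_singleton L a ih =>
    rw [List.filter_append, pickedSeq_append]
    by_cases ha : a = a₁
    · have hfa : (List.filter (fun a => decide (a ≠ a₁)) [a]) = [] := by simp [ha]
      rw [hfa, List.append_nil, ha]
      exact ih.trans (subset_pickStep _ _)
    · have hfa : (List.filter (fun a => decide (a ≠ a₁)) [a]) = [a] := by
        simp [ha]
      rw [hfa, pickedSeq_append, Function.update_of_ne ha r rk]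
      exact pickStep_mono _ ih

/-- let `S^{−a₁}_s` be the set of items picked after `s` steps when
the process is run (truthfully) with the picking sequence obtained from `π` by
deleting all occurrences of the manipulator `a₁`.  Then for every ranking `r`
reported by `a₁` and every `t ≤ m`, the set `S^{−a₁}_{t − μ(a₁,t)}` is contained
in the set of items picked during the first `t` steps under report `r`
(non-manipulators reporting their truthful rankings `rk`);
here `μ(a₁,t) = |{s ≤ t : π(s) = a₁}|` is the number of picks of `a₁` among the
first `t` steps. -/
theorem statement5 {A : Type*} [DecidableEq A] {m : ℕ} (a₁ : A)
    (rk : A → Fin m ≃ Fin m) (π : List A) (hπ : π.length = m)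
    (r : Fin m ≃ Fin m) (t : ℕ) (ht : t ≤ m) :
    pickedSeq rk ((π.filter fun a => decide (a ≠ a₁)).take (t - (π.take t).count a₁))
      ⊆ pickedSeq (Function.update rk a₁ r) (π.take t) := by
  have hlen : (π.take t).length = t := by
    rw [List.length_take]; omega
  have hkey : (π.filter fun a => decide (a ≠ a₁)).take (t - (π.take t).count a₁)
      = (π.take t).filter fun a => decide (a ≠ a₁) := by
    have hsplit : (π.filter fun a => decide (a ≠ a₁))
        = ((π.take t).filter fun a => decide (a ≠ a₁))
          ++ ((π.drop t).filter fun a => decide (a ≠ a₁)) := by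
      rw [← List.filter_append, List.take_append_drop]
    have hcount : ((π.take t).filter fun a => decide (a ≠ a₁)).length
        = t - (π.take t).count a₁ := by
      have h1 : ((π.take t).filter fun a => decide (a ≠ a₁)).length
          = (π.take t).countP fun a => decide (a ≠ a₁) := by
        rw [List.countP_eq_length_filter]
      have hA : (π.take t).length = _ := List.length_eq_countP_add_countP (fun a => decide (a ≠ a₁))
      rw [hlen] at hA
      have hB : ((π.take t).countP fun a => decide ¬(decide (a ≠ a₁) = true)) = (π.take t).count a₁ := by
        rw [List.count]
        apply List.countP_congr
        intro x _
        simp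
      omega
    rw [hsplit, ← hcount, List.take_left]
  rw [hkey]
  exact statement5_core a₁ rk r (π.take t)
end

section
/- Assume n ≥ 2. For every proper subset S ⊊ I and every two non-manipulating agents a_s and a_t, the ranks of their most preferred remaining items satisfy |rk_{a_s}(b(a_s,S)) − rk_{a_t}(b(a_t,S))| ≤ rg^max − 1. -/
/-- The ranks (as natural numbers) given to item `i` by the non-manipulators. -/
def nonManipRanks {A : Type*} [Fintype A] [DecidableEq A] {m : ℕ}
    (a₁ : A) (rk : A → Fin m ≃ Fin m) (i : Fin m) : Finset ℕ :=
  (Finset.univ.filter fun a => a ≠ a₁).image fun a => (rk a i : ℕ)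

/-- The range of an item: `max_{a ≠ a₁} rk_a(i) − min_{a ≠ a₁} rk_a(i) + 1`. -/
def rg {A : Type*} [Fintype A] [DecidableEq A] {m : ℕ}
    (a₁ : A) (rk : A → Fin m ≃ Fin m) (i : Fin m) : ℕ :=
  WithBot.unbotD 0 (nonManipRanks a₁ rk i).max - WithTop.untopD 0 (nonManipRanks a₁ rk i).min + 1

/-- `rg^max` : the maximum range of an item. -/
def rgMax {A : Type*} [Fintype A] [DecidableEq A] {m : ℕ}
    (a₁ : A) (rk : A → Fin m ≃ Fin m) : ℕ :=
  Finset.univ.sup fun i : Fin m => rg a₁ rk i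

/-
Let `b_s = b(a_s, S)` and `b_t = b(a_t, S)`. Since `b_t ∉ S`, agent `a_s` ranks `b_s` no worse
than `b_t`, and the two non-manipulators' ranks of the single item `b_t` differ by at most
`rg(b_t) − 1 ≤ rg^max − 1`. Hence `rk_{a_s}(b_s) − rk_{a_t}(b_t) ≤ rg^max − 1`; the other sign
is symmetric.
-/

theorem Finset.le_add_unbotD_max_sub_untopD_min {s : Finset ℕ} {x y : ℕ}
    (hx : x ∈ s) (hy : y ∈ s) : x ≤ y + (s.max.unbotD 0 - s.min.untopD 0) := by
  have hs : s.Nonempty := ⟨x, hx⟩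
  rw [← Finset.coe_max' hs, ← Finset.coe_min' hs, WithBot.unbotD_coe, WithTop.untopD_coe]
  have hx_le := s.le_max' x hx
  have hle_y := s.min'_le y hy
  omega

section Ranks

variable {A : Type*} [Fintype A] [DecidableEq A] {m : ℕ} {a₁ : A} {rk : A → Fin m ≃ Fin m}

theorem mem_nonManipRanks {a : A} (ha : a ≠ a₁) (i : Fin m) :
    (rk a i : ℕ) ∈ nonManipRanks a₁ rk i :=
  Finset.mem_image_of_mem _ (Finset.mem_filter.2 ⟨Finset.mem_univ a, ha⟩)

theorem rg_le_rgMax (i : Fin m) : rg a₁ rk i ≤ rgMax a₁ rk :=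
  Finset.le_sup (f := rg a₁ rk) (Finset.mem_univ i)

theorem rank_lt_rank_add_rgMax {a a' : A} (ha : a ≠ a₁) (ha' : a' ≠ a₁) (i : Fin m) :
    (rk a i : ℕ) < rk a' i + rgMax a₁ rk := by
  have h := Finset.le_add_unbotD_max_sub_untopD_min (mem_nonManipRanks (rk := rk) ha i)
    (mem_nonManipRanks ha' i)
  have hrg := rg_le_rgMax (a₁ := a₁) (rk := rk) i
  unfold rg at hrg
  omega

theorem rank_best_lt_rank_best_add_rgMax {S : Finset (Fin m)} {a a' : A} (ha : a ≠ a₁)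
    (ha' : a' ≠ a₁) {b b' : Fin m} (hb : IsBest (rk a) S b) (hb' : IsBest (rk a') S b') :
    (rk a b : ℕ) < rk a' b' + rgMax a₁ rk :=
  lt_of_le_of_lt (hb.2 b' hb'.1) (rank_lt_rank_add_rgMax ha ha' b')

end Ranks

theorem statement7_general {A : Type*} [Fintype A] [DecidableEq A] {m : ℕ}
    (a₁ : A) (rk : A → Fin m ≃ Fin m)
    (S : Finset (Fin m))
    (as at' : A) (has : as ≠ a₁) (hat : at' ≠ a₁)
    (bs bt : Fin m) (hbs : IsBest (rk as) S bs) (hbt : IsBest (rk at') S bt) :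
    |((rk as bs : ℕ) : ℤ) - ((rk at' bt : ℕ) : ℤ)| ≤ (rgMax a₁ rk : ℤ) - 1 := by
  have hst := rank_best_lt_rank_best_add_rgMax has hat hbs hbt
  have hts := rank_best_lt_rank_best_add_rgMax hat has hbt hbs
  rw [abs_sub_le_iff]
  omega

/-- assuming `n ≥ 2`, for every proper subset `S ⊊ I` and all
non-manipulators `aₛ, aₜ`, `|rk_{aₛ}(b(aₛ,S)) − rk_{aₜ}(b(aₜ,S))| ≤ rg^max − 1`. -/
theorem statement7 {A : Type*} [Fintype A] [DecidableEq A] {m : ℕ}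
    (a₁ : A) (rk : A → Fin m ≃ Fin m) (hn : 2 ≤ Fintype.card A)
    (S : Finset (Fin m)) (hS : S ⊂ Finset.univ)
    (as at' : A) (has : as ≠ a₁) (hat : at' ≠ a₁)
    (bs bt : Fin m) (hbs : IsBest (rk as) S bs) (hbt : IsBest (rk at') S bt) :
    |((rk as bs : ℕ) : ℤ) - ((rk at' bt : ℕ) : ℤ)| ≤ (rgMax a₁ rk : ℤ) - 1 :=
  statement7_general a₁ rk S as at' has hat bs bt hbs hbt
end

section
/- The value V(0,∅) of the dynamic programming recursion equals the optimal manipulation value, i.e., V(0,∅) = max over all rankings ≻ (bijections I → {1,…,m}) of u(φ_≻(a₁)). -/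
/-- `pickedUpTo rpt π t` : the set of items picked during the first `t` steps of
the sequential allocation process, where `π` is the (0-indexed) picking sequence
and agent `a` reports the ranking `rpt a`. -/
def pickedUpTo {A : Type*} {m : ℕ} (rpt : A → Fin m ≃ Fin m) (π : ℕ → A) :
    ℕ → Finset (Fin m)
  | 0 => ∅
  | t + 1 => pickStep (rpt (π t)) (pickedUpTo rpt π t)

/-- `alloc rpt π a` : the bundle of items obtained by agent `a` at the end of the
sequential allocation process (which runs for `m` steps). -/
def alloc {A : Type*} [DecidableEq A] {m : ℕ} (rpt : A → Fin m ≃ Fin m)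
    (π : ℕ → A) (a : A) : Finset (Fin m) :=
  (Finset.range m).biUnion fun t =>
    if π t = a then pickedUpTo rpt π (t + 1) \ pickedUpTo rpt π t else ∅

/-- `bFun rk S h` : the most preferred item of `I ∖ S` under the ranking `rk`,
i.e. `b(a, S)` for an agent `a` with ranking `rk`. -/
noncomputable def bFun {m : ℕ} (rk : Fin m ≃ Fin m) (S : Finset (Fin m))
    (h : Sᶜ.Nonempty) : Fin m :=
  rk.symm ((Sᶜ.image rk).min' (h.image rk))

lemma bFun_not_mem {m : ℕ} (rk : Fin m ≃ Fin m) (S : Finset (Fin m))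
    (h : Sᶜ.Nonempty) : bFun rk S h ∉ S := by
  have hmem : (Sᶜ.image rk).min' (h.image rk) ∈ Sᶜ.image rk := Finset.min'_mem _ _
  obtain ⟨y, hy, hyeq⟩ := Finset.mem_image.mp hmem
  have hb : bFun rk S h = y := by simp [bFun, ← hyeq]
  rw [hb]
  exact Finset.mem_compl.mp hy

/-- The dynamic-programming value function `V` on states `(k, S)`:
`V k S = Σ_{i ∈ I∖S} u i` when `|S| + k = m`;
`V k S = V (k+1) S` when the next picker `π(|S|+k+1)` (0-indexed: `π (|S|+k)`)
is the manipulator `a₁`; and otherwise, with `b = b(a,S)` the best remaining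
item of the next picker `a ≠ a₁`,
`V 0 S = V 0 (S ∪ {b})` and
`V k S = max (V (k-1) (S ∪ {b}) + u b) (V k (S ∪ {b}))` for `k ≥ 1`. -/
noncomputable def V {A : Type*} [DecidableEq A] {m : ℕ} (a₁ : A)
    (rk : A → Fin m ≃ Fin m) (π : ℕ → A) (u : Fin m → ℝ)
    (k : ℕ) (S : Finset (Fin m)) : ℝ :=
  if hlt : S.card + k < m then
    if hπ : π (S.card + k) = a₁ then
      V a₁ rk π u (k + 1) S
    else
      have hne : Sᶜ.Nonempty := by
        rw [← Finset.card_pos, Finset.card_compl, Fintype.card_fin]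
        omega
      if hk : k = 0 then
        V a₁ rk π u 0 (insert (bFun (rk (π (S.card + k))) S hne) S)
      else
        max (V a₁ rk π u (k - 1) (insert (bFun (rk (π (S.card + k))) S hne) S)
              + u (bFun (rk (π (S.card + k))) S hne))
          (V a₁ rk π u k (insert (bFun (rk (π (S.card + k))) S hne) S))
  else
    ∑ i ∈ Sᶜ, u i
termination_by (m - (S.card + k), k)
decreasing_by
  · apply Prod.Lex.left
    omega
  · apply Prod.Lex.left
    rw [Finset.card_insert_of_notMem (bFun_not_mem _ _ _)]
    omega
  · have hcard : (insert (bFun (rk (π (S.card + k))) S hne) S).card + (k - 1)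
        = S.card + k := by
      rw [Finset.card_insert_of_notMem (bFun_not_mem _ _ _)]
      omega
    rw [hcard]
    exact Prod.Lex.right _ (by omega)
  · apply Prod.Lex.left
    rw [Finset.card_insert_of_notMem (bFun_not_mem _ _ _)]
    omega

section Picking

variable {m : ℕ}

def IsBestOutside (rk : Fin m ≃ Fin m) (S : Finset (Fin m)) (b : Fin m) : Prop :=
  b ∉ S ∧ ∀ j ∉ S, rk b ≤ rk j

variable {rk : Fin m ≃ Fin m} {S T : Finset (Fin m)} {b : Fin m}

lemma compl_nonempty_of_card_lt (h : S.card < m) : Sᶜ.Nonempty := by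
  rw [← Finset.card_pos, Finset.card_compl, Fintype.card_fin]
  omega

lemma isBestOutside_bFun (h : Sᶜ.Nonempty) : IsBestOutside rk S (bFun rk S h) := by
  refine ⟨bFun_not_mem rk S h, fun j hj => ?_⟩
  simpa [bFun] using Finset.min'_le _ _ (Finset.mem_image_of_mem rk (Finset.mem_compl.mpr hj))

lemma IsBestOutside.eq_bFun (hb : IsBestOutside rk S b) (h : Sᶜ.Nonempty) :
    b = bFun rk S h :=
  have hbf := isBestOutside_bFun (rk := rk) h
  rk.injective (le_antisymm (hb.2 _ hbf.1) (hbf.2 _ hb.1))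

lemma IsBestOutside.mono (hb : IsBestOutside rk S b) (hST : S ⊆ T) (hbT : b ∉ T) :
    IsBestOutside rk T b :=
  ⟨hbT, fun j hj => hb.2 j fun hjS => hj (hST hjS)⟩

lemma pickStep_eq_insert (hb : IsBestOutside rk S b) : pickStep rk S = insert b S := by
  have hfilter : Sᶜ.filter (fun i => ∀ j ∈ Sᶜ, rk i ≤ rk j) = {b} := by
    ext x
    simp only [Finset.mem_filter, Finset.mem_compl, Finset.mem_singleton]
    refine ⟨fun ⟨hxS, hx⟩ => rk.injective (le_antisymm (hx b hb.1) (hb.2 x hxS)), ?_⟩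
    rintro rfl
    exact hb
  rw [pickStep, hfilter, Finset.union_comm, Finset.insert_eq]

end Picking

section Allocation

variable {A : Type*} {m : ℕ} {rpt : A → Fin m ≃ Fin m} {π : ℕ → A}

lemma pickedUpTo_mono : Monotone (pickedUpTo rpt π) :=
  monotone_nat_of_le_succ fun _ => Finset.subset_union_left

lemma pickedUpTo_succ_of_isBestOutside {t : ℕ} {b : Fin m}
    (hb : IsBestOutside (rpt (π t)) (pickedUpTo rpt π t) b) :
    pickedUpTo rpt π (t + 1) = insert b (pickedUpTo rpt π t) :=
  pickStep_eq_insert hb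

lemma card_pickedUpTo {t : ℕ} (ht : t ≤ m) : (pickedUpTo rpt π t).card = t := by
  induction t with
  | zero => rfl
  | succ t ih =>
    have hne := compl_nonempty_of_card_lt (S := pickedUpTo rpt π t) (by omega)
    have hb := isBestOutside_bFun (rk := rpt (π t)) hne
    rw [pickedUpTo_succ_of_isBestOutside hb, Finset.card_insert_of_notMem hb.1, ih (by omega)]

lemma eq_of_mem_sdiff_pickedUpTo {s t : ℕ} {x : Fin m}
    (hs : x ∈ pickedUpTo rpt π (s + 1) \ pickedUpTo rpt π s)
    (ht : x ∈ pickedUpTo rpt π (t + 1) \ pickedUpTo rpt π t) : s = t := by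
  rw [Finset.mem_sdiff] at hs ht
  by_contra hst
  rcases Nat.lt_or_gt_of_ne hst with h | h
  · exact ht.2 (pickedUpTo_mono (Nat.succ_le_of_lt h) hs.1)
  · exact hs.2 (pickedUpTo_mono (Nat.succ_le_of_lt h) ht.1)

variable [DecidableEq A] {a : A} {x : Fin m}

lemma mem_alloc :
    x ∈ alloc rpt π a ↔
      ∃ t < m, π t = a ∧ x ∈ pickedUpTo rpt π (t + 1) \ pickedUpTo rpt π t := by
  simp only [alloc, Finset.mem_biUnion, Finset.mem_range]
  refine exists_congr fun t => and_congr_right fun _ => ?_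
  split_ifs with h <;> simp [h]

lemma mem_alloc_of_pick {t : ℕ} (ht : t < m) (hπ : π t = a)
    (hx : x ∈ pickedUpTo rpt π (t + 1) \ pickedUpTo rpt π t) : x ∈ alloc rpt π a :=
  mem_alloc.mpr ⟨t, ht, hπ, hx⟩

lemma notMem_alloc_of_pick {t : ℕ} (hπ : π t ≠ a)
    (hx : x ∈ pickedUpTo rpt π (t + 1) \ pickedUpTo rpt π t) : x ∉ alloc rpt π a := by
  intro hmem
  obtain ⟨s, -, hπs, hxs⟩ := mem_alloc.mp hmem
  exact hπ (eq_of_mem_sdiff_pickedUpTo hxs hx ▸ hπs)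

end Allocation

section ValueFunction

variable {A : Type*} [DecidableEq A] {m : ℕ} (a₁ : A) (rk : A → Fin m ≃ Fin m)
  (π : ℕ → A) (u : Fin m → ℝ) {k : ℕ} {S : Finset (Fin m)} {b : Fin m}

lemma V_of_le (h : m ≤ S.card + k) : V a₁ rk π u k S = ∑ i ∈ Sᶜ, u i := by
  rw [V.eq_def, dif_neg (by omega)]

lemma V_of_eq_manipulator (h : S.card + k < m) (hπ : π (S.card + k) = a₁) :
    V a₁ rk π u k S = V a₁ rk π u (k + 1) S := by
  rw [V.eq_def, dif_pos h, dif_pos hπ]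

lemma V_zero_of_ne_manipulator (h : S.card < m) (hπ : π S.card ≠ a₁)
    (hb : IsBestOutside (rk (π S.card)) S b) :
    V a₁ rk π u 0 S = V a₁ rk π u 0 (insert b S) := by
  rw [V.eq_def, dif_pos (show S.card + 0 < m from h),
    dif_neg (show ¬π (S.card + 0) = a₁ from hπ), dif_pos rfl]
  congr 2
  exact (hb.eq_bFun _).symm

lemma V_succ_of_ne_manipulator (h : S.card + (k + 1) < m) (hπ : π (S.card + (k + 1)) ≠ a₁)
    (hb : IsBestOutside (rk (π (S.card + (k + 1)))) S b) :
    V a₁ rk π u (k + 1) S =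
      max (V a₁ rk π u k (insert b S) + u b) (V a₁ rk π u (k + 1) (insert b S)) := by
  rw [V.eq_def, dif_pos h, dif_neg hπ, dif_neg (Nat.succ_ne_zero k), ← hb.eq_bFun]
  rfl

lemma V_insert_le_of_ne_manipulator (h : S.card + k < m) (hπ : π (S.card + k) ≠ a₁)
    (hb : IsBestOutside (rk (π (S.card + k))) S b) :
    V a₁ rk π u k (insert b S) ≤ V a₁ rk π u k S := by
  cases k with
  | zero => exact (V_zero_of_ne_manipulator a₁ rk π u h hπ hb).ge
  | succ k => exact (V_succ_of_ne_manipulator a₁ rk π u h hπ hb).ge.trans' (le_max_right _ _)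

end ValueFunction

section UpperBound

variable {A : Type*} [DecidableEq A] {m : ℕ} (a₁ : A) (rk rpt : A → Fin m ≃ Fin m)
  (π : ℕ → A) (u : Fin m → ℝ)

/-- The items of `U`, already picked by time `t`, are viewed as held by banked picks of `a₁`. -/
def GainBoundedByValue (t : ℕ) (U : Finset (Fin m)) : Prop :=
  ∑ i ∈ alloc rpt π a₁ \ pickedUpTo rpt π t, u i + ∑ i ∈ U, u i ≤
    V a₁ rk π u U.card (pickedUpTo rpt π t \ U)

variable {a₁ rk rpt π u} {t : ℕ} {U : Finset (Fin m)}

lemma gainBoundedByValue_end :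
    GainBoundedByValue a₁ rk rpt π u m U := by
  have hall : pickedUpTo rpt π m = Finset.univ :=
    Finset.eq_univ_of_card _ (by simpa using card_pickedUpTo le_rfl)
  have hcard : (Finset.univ \ U).card + U.card = m := by
    simpa using Finset.card_sdiff_add_card_eq_card (Finset.subset_univ U)
  rw [GainBoundedByValue, hall, V_of_le _ _ _ _ hcard.ge, ← Finset.compl_eq_univ_sdiff,
    compl_compl, Finset.sdiff_eq_empty_iff_subset.mpr (Finset.subset_univ _),
    Finset.sum_empty, zero_add]

lemma gainBoundedByValue_of_eq_manipulator (ht : t < m) (hπ : π t = a₁)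
    (hU : U ⊆ pickedUpTo rpt π t)
    (ih : ∀ U' ⊆ pickedUpTo rpt π (t + 1), GainBoundedByValue a₁ rk rpt π u (t + 1) U') :
    GainBoundedByValue a₁ rk rpt π u t U := by
  unfold GainBoundedByValue at ih ⊢
  set R := pickedUpTo rpt π t
  have hR : R.card = t := card_pickedUpTo ht.le
  have hb := isBestOutside_bFun (rk := rpt (π t)) (compl_nonempty_of_card_lt (S := R) (hR ▸ ht))
  set i := bFun (rpt (π t)) R _
  have hnext : pickedUpTo rpt π (t + 1) = insert i R := pickedUpTo_succ_of_isBestOutside hb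
  have hi : i ∈ alloc rpt π a₁ \ R := by
    refine Finset.mem_sdiff.mpr ⟨mem_alloc_of_pick ht hπ ?_, hb.1⟩
    exact Finset.mem_sdiff.mpr ⟨hnext ▸ R.mem_insert_self i, hb.1⟩
  have hiU : i ∉ U := fun h => hb.1 (hU h)
  have hstep := ih (insert i U) (hnext ▸ Finset.insert_subset_insert i hU)
  rw [hnext, Finset.insert_sdiff_insert, Finset.sdiff_insert_of_notMem hb.1,
    Finset.card_insert_of_notMem hiU, Finset.sum_insert hiU, Finset.sdiff_insert] at hstep
  have hUR : (R \ U).card + U.card = t := by rw [Finset.card_sdiff_add_card_eq_card hU, hR]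
  rw [V_of_eq_manipulator _ _ _ _ (by omega) (by rwa [hUR]),
    ← Finset.add_sum_erase _ _ hi]
  linarith

lemma gainBoundedByValue_of_claim (ht : t < m) (hπ : π t ≠ a₁)
    (hU : U ⊆ pickedUpTo rpt π t) {b : Fin m}
    (hb : IsBestOutside (rk (π t)) (pickedUpTo rpt π t \ U) b) (hbU : b ∈ U)
    (ih : GainBoundedByValue a₁ rk rpt π u t (U.erase b)) :
    GainBoundedByValue a₁ rk rpt π u t U := by
  unfold GainBoundedByValue at ih ⊢
  set R := pickedUpTo rpt π t
  obtain ⟨k, hk⟩ : ∃ k, U.card = k + 1 :=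
    Nat.exists_eq_succ_of_ne_zero (Finset.card_ne_zero_of_mem hbU)
  have htime : (R \ U).card + (k + 1) = t := by
    rw [← hk, Finset.card_sdiff_add_card_eq_card hU, card_pickedUpTo ht.le]
  rw [Finset.card_erase_of_mem hbU, hk, Nat.add_sub_cancel, Finset.sdiff_erase (hU hbU)] at ih
  rw [hk, V_succ_of_ne_manipulator _ _ _ _ (htime ▸ ht) (htime ▸ hπ) (htime ▸ hb),
    ← Finset.add_sum_erase _ _ hbU]
  linarith [le_max_left (V a₁ rk π u k (insert b (R \ U)) + u b)
    (V a₁ rk π u (k + 1) (insert b (R \ U)))]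

lemma gainBoundedByValue_of_cede (ht : t < m) (hπ : π t ≠ a₁) (hrpt : rpt (π t) = rk (π t))
    (hU : U ⊆ pickedUpTo rpt π t)
    {b : Fin m} (hb : IsBestOutside (rk (π t)) (pickedUpTo rpt π t \ U) b) (hbU : b ∉ U)
    (ih : ∀ U' ⊆ pickedUpTo rpt π (t + 1), GainBoundedByValue a₁ rk rpt π u (t + 1) U') :
    GainBoundedByValue a₁ rk rpt π u t U := by
  unfold GainBoundedByValue at ih ⊢
  set R := pickedUpTo rpt π t
  have hbR : b ∉ R := fun h => hb.1 (Finset.mem_sdiff.mpr ⟨h, hbU⟩)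
  have hnext : pickedUpTo rpt π (t + 1) = insert b R :=
    pickedUpTo_succ_of_isBestOutside (hrpt ▸ hb.mono Finset.sdiff_subset hbR)
  have hb_alloc : b ∉ alloc rpt π a₁ :=
    notMem_alloc_of_pick hπ (Finset.mem_sdiff.mpr ⟨hnext ▸ R.mem_insert_self b, hbR⟩)
  have hstep := ih U (hnext ▸ hU.trans (Finset.subset_insert b R))
  rw [hnext, Finset.sdiff_insert_of_notMem hb_alloc, Finset.insert_sdiff_of_notMem _ hbU] at hstep
  have htime : (R \ U).card + U.card = t := by
    rw [Finset.card_sdiff_add_card_eq_card hU, card_pickedUpTo ht.le]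
  exact hstep.trans
    (V_insert_le_of_ne_manipulator _ _ _ _ (htime ▸ ht) (htime ▸ hπ) (htime ▸ hb))

theorem gainBoundedByValue (hrpt : ∀ a ≠ a₁, rpt a = rk a) {t : ℕ} (ht : t ≤ m)
    {U : Finset (Fin m)} (hU : U ⊆ pickedUpTo rpt π t) :
    GainBoundedByValue a₁ rk rpt π u t U := by
  rcases ht.eq_or_lt with rfl | ht
  · exact gainBoundedByValue_end
  by_cases hπ : π t = a₁
  · exact gainBoundedByValue_of_eq_manipulator ht hπ hU
      fun U' hU' => gainBoundedByValue hrpt (t := t + 1) ht (U := U') hU'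
  have hne := compl_nonempty_of_card_lt (S := pickedUpTo rpt π t \ U) (m := m) (by
    have := Finset.card_le_card (Finset.sdiff_subset (s := pickedUpTo rpt π t) (t := U))
    rw [card_pickedUpTo ht.le] at this
    omega)
  have hb := isBestOutside_bFun (rk := rk (π t)) hne
  by_cases hbU : bFun (rk (π t)) _ hne ∈ U
  · have := Finset.card_erase_lt_of_mem hbU
    exact gainBoundedByValue_of_claim ht hπ hU hb hbU
      (gainBoundedByValue hrpt ht.le (U := U.erase _) ((Finset.erase_subset _ _).trans hU))
  · exact gainBoundedByValue_of_cede ht hπ (hrpt _ hπ) hU hb hbU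
      fun U' hU' => gainBoundedByValue hrpt (t := t + 1) ht (U := U') hU'
termination_by (m - t, U.card)

theorem sum_alloc_le_V (hrpt : ∀ a ≠ a₁, rpt a = rk a) :
    ∑ i ∈ alloc rpt π a₁, u i ≤ V a₁ rk π u 0 ∅ := by
  simpa [GainBoundedByValue, pickedUpTo] using
    gainBoundedByValue hrpt (Nat.zero_le m) (Finset.empty_subset (pickedUpTo rpt π 0))

end UpperBound

section LowerBound

variable {A : Type*} {m : ℕ}

/-- A lazy run of the DP from the state `(k, S)`: `L` lists, in the order in which `a₁` should
rank them, the items she ends up with, its first `k` entries being those already taken with her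
`k` banked picks. A `claim` spends a banked pick on `b`, retroactively. -/
inductive IsPlan (a₁ : A) (rk : A → Fin m ≃ Fin m) (π : ℕ → A) :
    ℕ → Finset (Fin m) → List (Fin m) → Prop
  | done {k S} : m ≤ S.card + k → IsPlan a₁ rk π k S Sᶜ.toList
  | bank {k S L} : S.card + k < m → π (S.card + k) = a₁ → IsPlan a₁ rk π (k + 1) S L →
      IsPlan a₁ rk π k S L
  | cede {k S L b} : π (S.card + k) ≠ a₁ → IsBestOutside (rk (π (S.card + k))) S b →
      IsPlan a₁ rk π k (insert b S) L → IsPlan a₁ rk π k S L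
  | claim {k S L b} : b ∉ S → IsPlan a₁ rk π k (insert b S) L →
      IsPlan a₁ rk π (k + 1) S (b :: L)

variable {a₁ : A} {rk : A → Fin m ≃ Fin m} {π : ℕ → A} {k : ℕ} {S : Finset (Fin m)}
  {L : List (Fin m)}

lemma IsPlan.notMem (hP : IsPlan a₁ rk π k S L) : ∀ x ∈ L, x ∉ S := by
  induction hP with
  | done => simp
  | bank _ _ _ ih => exact ih
  | cede _ _ _ ih => exact fun x hx hxS => ih x hx (Finset.mem_insert_of_mem hxS)
  | claim hb _ ih =>
    intro x hx hxS
    rcases List.mem_cons.mp hx with rfl | hx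
    · exact hb hxS
    · exact ih x hx (Finset.mem_insert_of_mem hxS)

lemma IsPlan.nodup (hP : IsPlan a₁ rk π k S L) : L.Nodup := by
  induction hP with
  | done => exact Finset.nodup_toList _
  | bank _ _ _ ih => exact ih
  | cede _ _ _ ih => exact ih
  | claim _ hP ih =>
    exact List.nodup_cons.mpr ⟨fun hb => hP.notMem _ hb (Finset.mem_insert_self _ _), ih⟩

theorem exists_isPlan [DecidableEq A] (u : Fin m → ℝ) (k : ℕ) (S : Finset (Fin m)) :
    ∃ L, IsPlan a₁ rk π k S L ∧ (L.map u).sum = V a₁ rk π u k S := by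
  induction k, S using V.induct a₁ rk π with
  | case1 k S h hπ ih =>
    obtain ⟨L, hP, hL⟩ := ih
    exact ⟨L, hP.bank h hπ, by rw [hL, V_of_eq_manipulator _ _ _ _ h hπ]⟩
  | case2 S h hπ hne ih =>
    obtain ⟨L, hP, hL⟩ := ih
    have hb := isBestOutside_bFun (rk := rk (π (S.card + 0))) hne
    exact ⟨L, hP.cede hπ hb, by rw [hL, V_zero_of_ne_manipulator _ _ _ _ h hπ hb]⟩
  | case3 k S h hπ hne hk ihc ihs =>
    obtain ⟨k, rfl⟩ := Nat.exists_eq_succ_of_ne_zero hk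
    have hb := isBestOutside_bFun (rk := rk (π (S.card + (k + 1)))) hne
    rw [V_succ_of_ne_manipulator _ _ _ _ h hπ hb]
    obtain ⟨Lc, hPc, hLc⟩ := ihc
    obtain ⟨Ls, hPs, hLs⟩ := ihs
    rcases le_total (V a₁ rk π u (k + 1) (insert _ S)) (V a₁ rk π u k (insert _ S) + u _)
      with hle | hle
    · refine ⟨_ :: Lc, hPc.claim hb.1, ?_⟩
      rw [max_eq_left hle, List.map_cons, List.sum_cons, hLc, add_comm]
      rfl
    · exact ⟨Ls, hPs.cede hπ hb, by rw [max_eq_right hle, hLs]⟩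
  | case4 k S h =>
    refine ⟨Sᶜ.toList, .done (by omega), ?_⟩
    rw [Finset.sum_map_toList, V_of_le _ _ _ _ (by omega)]

def PicksInOrder (r : Fin m ≃ Fin m) (S : Finset (Fin m)) (L : List (Fin m)) : Prop :=
  ∀ i (hi : i < L.length), IsBestOutside r (S ∪ (L.take i).toFinset) L[i]

lemma toFinset_take_succ (hk : k < L.length) :
    (L.take (k + 1)).toFinset = insert L[k] (L.take k).toFinset := by
  rw [← List.take_concat_get' L k hk, List.toFinset_append, List.toFinset_cons,
    List.toFinset_nil, Finset.union_insert, Finset.union_empty]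

variable {r : Fin m ≃ Fin m} {b : Fin m}

lemma PicksInOrder.of_cons (h : PicksInOrder r S (b :: L)) : PicksInOrder r (insert b S) L := by
  intro i hi
  have := h (i + 1) (by simpa using hi)
  rwa [List.take_succ_cons, List.toFinset_cons, Finset.union_insert, ← Finset.insert_union]
    at this

lemma PicksInOrder.insert (h : PicksInOrder r S L) (hb : b ∉ L) :
    PicksInOrder r (insert b S) L := by
  intro i hi
  rw [Finset.insert_union]
  refine (h i hi).mono (Finset.subset_insert _ _) ?_
  rw [Finset.mem_insert, not_or]
  exact ⟨fun hib => hb (hib ▸ List.getElem_mem hi), (h i hi).1⟩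

theorem IsPlan.mem_alloc_of_mem_drop [DecidableEq A] {rpt : A → Fin m ≃ Fin m}
    (hP : IsPlan a₁ rk π k S L) (hrpt : ∀ a ≠ a₁, rpt a = rk a)
    (hr : PicksInOrder (rpt a₁) S L)
    (hS : pickedUpTo rpt π (S.card + k) = S ∪ (L.take k).toFinset) :
    ∀ x ∈ L.drop k, x ∈ alloc rpt π a₁ := by
  induction hP with
  | @done k S h =>
    have hlen : Sᶜ.toList.length ≤ k := by
      rw [Finset.length_toList, Finset.card_compl, Fintype.card_fin]
      omega
    simp [List.drop_eq_nil_of_le hlen]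
  | @bank k S L h hπ _ ih =>
    by_cases hk : k < L.length
    swap
    · simp [List.drop_eq_nil_of_le (not_lt.mp hk)]
    have hbest :
        IsBestOutside (rpt (π (S.card + k))) (pickedUpTo rpt π (S.card + k)) L[k] := by
      rw [hπ, hS]
      exact hr k hk
    have hnext := pickedUpTo_succ_of_isBestOutside hbest
    rw [List.drop_eq_getElem_cons hk]
    intro x hx
    rcases List.mem_cons.mp hx with rfl | hx
    · exact mem_alloc_of_pick h hπ
        (Finset.mem_sdiff.mpr ⟨hnext ▸ Finset.mem_insert_self _ _, hbest.1⟩)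
    · refine ih hr ?_ x hx
      rw [← add_assoc, hnext, hS, toFinset_take_succ hk, Finset.union_insert]
  | @cede k S L b hπ hb hP ih =>
    have hbL : b ∉ L := fun h => hP.notMem b h (Finset.mem_insert_self b S)
    have hbest :
        IsBestOutside (rpt (π (S.card + k))) (pickedUpTo rpt π (S.card + k)) b := by
      rw [hrpt _ hπ, hS]
      refine hb.mono Finset.subset_union_left ?_
      rw [Finset.mem_union, not_or, List.mem_toFinset]
      exact ⟨hb.1, fun h => hbL (List.mem_of_mem_take h)⟩
    refine ih (hr.insert hbL) ?_
    rw [Finset.card_insert_of_notMem hb.1, Nat.add_right_comm,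
      pickedUpTo_succ_of_isBestOutside hbest, hS, Finset.insert_union]
  | @claim k S L b hb _ ih =>
    intro x hx
    refine ih hr.of_cons ?_ x (by simpa using hx)
    rw [Finset.card_insert_of_notMem hb, Nat.add_right_comm, add_assoc, hS, List.take_succ_cons,
      List.toFinset_cons, Finset.union_insert, Finset.insert_union]

theorem exists_picksInOrder (hL : L.Nodup) : ∃ r : Fin m ≃ Fin m, PicksInOrder r ∅ L := by
  set l := L ++ (L.toFinset)ᶜ.toList
  have hl : l.Nodup := hL.append (Finset.nodup_toList _) fun x hxL hx => by simp_all
  have hall : ∀ x, x ∈ l := fun x => by by_cases hx : x ∈ L <;> simp [l, hx]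
  let e := hl.getEquivOfForallMemList l hall
  have hlen : l.length = m := by simpa using Fintype.card_congr e
  -- `r y` is the position of `y` in `l`
  set r := e.symm.trans (finCongr hlen)
  have hr_get : ∀ j (hj : j < l.length), (r l[j] : ℕ) = j := fun j hj => by
    change ((finCongr hlen) (e.symm (e ⟨j, hj⟩)) : ℕ) = j
    simp
  have hget_r : ∀ y, l[(r y : ℕ)]'(hlen.symm ▸ (r y).2) = y := fun y => e.apply_symm_apply y
  refine ⟨r, fun i hi => ?_⟩
  have hLi : L[i] = l[i]'(by rw [List.length_append]; omega) :=
    (List.getElem_append_left hi).symm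
  have hri : (r L[i] : ℕ) = i := by rw [hLi, hr_get]
  refine ⟨?_, fun y hy => ?_⟩
  · rw [Finset.empty_union, List.mem_toFinset, List.mem_take_iff_getElem]
    rintro ⟨j, hj, hji⟩
    have := (hL.getElem_inj_iff).mp hji
    omega
  · rw [Fin.le_def, hri]
    by_contra! hlt
    have hyL : y = L[(r y : ℕ)]'(by omega) := by
      rw [← List.getElem_append_left (as := L) (bs := (L.toFinset)ᶜ.toList)]
      exact (hget_r y).symm
    apply hy
    rw [Finset.empty_union, List.mem_toFinset, List.mem_take_iff_getElem]
    exact ⟨r y, by omega, hyL.symm⟩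

theorem exists_V_le_sum_alloc [DecidableEq A] (u : Fin m → ℝ) (hu : ∀ i, 0 ≤ u i) :
    ∃ r : Fin m ≃ Fin m,
      V a₁ rk π u 0 ∅ ≤ ∑ i ∈ alloc (Function.update rk a₁ r) π a₁, u i := by
  obtain ⟨L, hP, hsum⟩ := exists_isPlan (a₁ := a₁) (rk := rk) (π := π) u 0 ∅
  obtain ⟨r, hr⟩ := exists_picksInOrder hP.nodup
  have hsub : L.toFinset ⊆ alloc (Function.update rk a₁ r) π a₁ := fun x hx =>
    hP.mem_alloc_of_mem_drop (fun a ha => Function.update_of_ne ha _ _)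
      (by rwa [Function.update_self]) (by simp [pickedUpTo]) x (by simpa using hx)
  refine ⟨r, ?_⟩
  calc V a₁ rk π u 0 ∅ = ∑ i ∈ L.toFinset, u i := by
        rw [← hsum, List.sum_toFinset _ hP.nodup]
    _ ≤ _ := Finset.sum_le_sum_of_subset_of_nonneg hsub fun i _ _ => hu i

end LowerBound

theorem statement12_general {A : Type*} [DecidableEq A] {m : ℕ} (a₁ : A)
    (rk : A → Fin m ≃ Fin m) (π : ℕ → A) (u : Fin m → ℝ)
    (hpos : ∀ i, 0 < u i) :
    V a₁ rk π u 0 ∅ =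
      ⨆ r : Fin m ≃ Fin m, ∑ i ∈ alloc (Function.update rk a₁ r) π a₁, u i := by
  set gain := fun r : Fin m ≃ Fin m => ∑ i ∈ alloc (Function.update rk a₁ r) π a₁, u i
  obtain ⟨r₀, hr₀⟩ :=
    exists_V_le_sum_alloc (a₁ := a₁) (rk := rk) (π := π) u fun i => (hpos i).le
  refine le_antisymm (hr₀.trans (le_ciSup (Set.finite_range gain).bddAbove r₀)) (ciSup_le ?_)
  exact fun r => sum_alloc_le_V fun a ha => Function.update_of_ne ha _ _

/-- the value `V(0, ∅)` of the dynamic programming recursion equals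
the optimal manipulation value, i.e. the maximum over all rankings `r` that the
manipulator `a₁` may report of the utility `u(φ_r(a₁))` of the bundle she gets
(non-manipulators reporting their truthful rankings `rk`; `u` is the
manipulator's injective positive utility function). -/
theorem statement12 {A : Type*} [DecidableEq A] {m : ℕ} (a₁ : A)
    (rk : A → Fin m ≃ Fin m) (π : ℕ → A) (u : Fin m → ℝ)
    (hpos : ∀ i, 0 < u i) (hinj : Function.Injective u) :
    V a₁ rk π u 0 ∅ =
      ⨆ r : Fin m ≃ Fin m, ∑ i ∈ alloc (Function.update rk a₁ r) π a₁, u i :=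
  statement12_general a₁ rk π u hpos
end

section
/- The factor-2 bound on manipulation is tight: for every real number c < 2 there exist a number of agents n, a number of items m, truthful rankings for all agents, a picking sequence π, an injective positive utility function u for the manipulator consistent with her truthful ranking, and a reported ranking ≻, such that u(φ_≻(a₁)) > c · u_T. -/
/-!
Two agents, three items, picking sequence a₁ a₂ a₁, with a₁'s utilities `1 > 1 - δ > δ` on items
`0, 1, 2` and the other agent preferring `1` to `2` to `0`. Truthfully a₁ takes item 0, loses item 1
and ends with item 2, for `1 + δ`. By reporting item 1 first she still gets item 0 at the third
step, since the other agent then takes item 2, for `2 - δ`; the ratio tends to 2 as `δ → 0`.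
-/

namespace TightnessExample

/-- Agent 1 prefers item `1` to `2` to `0`: `(finRotate 3).symm` gives item `i` the rank `i - 1`. -/
def truthfulRankings : Fin 2 → Fin 3 ≃ Fin 3 := ![Equiv.refl _, (finRotate 3).symm]

def pickingSequence (t : ℕ) : Fin 2 := if t = 1 then 1 else 0

def misreport : Fin 3 ≃ Fin 3 := Equiv.swap 0 1

lemma alloc_truthful : alloc truthfulRankings pickingSequence 0 = {0, 2} := by decide

lemma alloc_misreport :
    alloc (Function.update truthfulRankings 0 misreport) pickingSequence 0 = {0, 1} := by
  decide

def utility (δ : ℝ) : Fin 3 → ℝ := ![1, 1 - δ, δ]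

lemma utility_strictAnti {δ : ℝ} (hδ₀ : 0 < δ) (hδ₁ : δ < 1 / 2) : StrictAnti (utility δ) := by
  intro i j hij
  fin_cases i <;> fin_cases j <;> simp_all [utility] <;> linarith

lemma sum_utility_alloc_truthful (δ : ℝ) :
    ∑ i ∈ alloc truthfulRankings pickingSequence 0, utility δ i = 1 + δ := by
  simp [alloc_truthful, utility]

lemma sum_utility_alloc_misreport (δ : ℝ) :
    ∑ i ∈ alloc (Function.update truthfulRankings 0 misreport) pickingSequence 0, utility δ i =
      2 - δ := by
  rw [alloc_misreport, Finset.sum_pair (by decide)]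
  simp only [utility, Matrix.cons_val_zero, Matrix.cons_val_one]
  ring

lemma exists_mul_one_add_lt_two_sub {c : ℝ} (hc : c < 2) :
    ∃ δ : ℝ, 0 < δ ∧ δ < 1 / 2 ∧ c * (1 + δ) < 2 - δ := by
  set δ := min (1 / 4 : ℝ) ((2 - c) / 4)
  have hδ₀ : 0 < δ := lt_min (by norm_num) (by linarith)
  have hδ₁ : δ ≤ 1 / 4 := min_le_left _ _
  have hδc : δ ≤ (2 - c) / 4 := min_le_right _ _
  refine ⟨δ, hδ₀, by linarith, ?_⟩
  rcases le_or_gt c 0 with hc₀ | hc₀ <;> nlinarith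

end TightnessExample

open TightnessExample in
/-- the factor-2 bound on manipulation is tight: for every `c < 2`
there are a number `n` of agents, a number `m` of items, truthful rankings `rk`,
a picking sequence `π`, an injective positive utility function `u` for the
manipulator `a₁`, consistent with her truthful ranking
(`rk a₁ i < rk a₁ j ↔ u j < u i`), and a reported ranking `r` such that
`u(φ_r(a₁)) > c · u_T`, where `u_T` is the utility of the bundle `a₁` gets when
reporting truthfully. -/
theorem statement14 (c : ℝ) (hc : c < 2) :
    ∃ (n m : ℕ) (a₁ : Fin n) (rk : Fin n → Fin m ≃ Fin m) (π : ℕ → Fin n)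
      (u : Fin m → ℝ) (r : Fin m ≃ Fin m),
      (∀ i, 0 < u i) ∧ Function.Injective u ∧
      (∀ i j, rk a₁ i < rk a₁ j ↔ u j < u i) ∧
      c * ∑ i ∈ alloc rk π a₁, u i
        < ∑ i ∈ alloc (Function.update rk a₁ r) π a₁, u i := by
  obtain ⟨δ, hδ₀, hδ₁, hgap⟩ := exists_mul_one_add_lt_two_sub hc
  have hu := utility_strictAnti hδ₀ hδ₁
  refine ⟨2, 3, 0, truthfulRankings, pickingSequence, utility δ, misreport,
    fun i => hδ₀.trans_le (hu.antitone (Fin.le_last i)), hu.injective,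
    fun i j => hu.lt_iff_gt.symm, ?_⟩
  rwa [sum_utility_alloc_truthful, sum_utility_alloc_misreport]
end

section
/- If the manipulator picks exactly once (μ(a₁) = 1), then she cannot manipulate: for every ranking ≻ reported by a₁, u(φ_≻(a₁)) ≤ u_T. -/
/-!
Before the manipulator's single turn `t₀` nobody consults her report, so the set `C` of items
picked so far is the same whichever ranking she reports. At `t₀` she receives exactly one item of
the nonempty complement of `C`, namely the first one according to her report; under her truthful
ranking this is the item of `Cᶜ` of highest utility, so no report can do better.
-/

open Finset

lemma filter_range_eq_singleton_iff {p : ℕ → Prop} [DecidablePred p] {m t₀ : ℕ} :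
    (range m).filter p = {t₀} ↔ ∀ t, t < m ∧ p t ↔ t = t₀ := by
  simp [Finset.ext_iff]

section PickStep

variable {m : ℕ} (rk : Fin m ≃ Fin m) (S : Finset (Fin m))

lemma pickStep_sdiff_self :
    pickStep rk S \ S = Sᶜ.filter fun i => ∀ j ∈ Sᶜ, rk i ≤ rk j := by
  rw [pickStep, union_sdiff_left, sdiff_eq_self_of_disjoint]
  exact disjoint_left.mpr fun i hi hS => (mem_compl.mp (mem_filter.mp hi).1) hS

lemma card_pickStep_sdiff_self_le_one : (pickStep rk S \ S).card ≤ 1 := by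
  rw [pickStep_sdiff_self, card_le_one]
  intro i hi j hj
  rw [mem_filter] at hi hj
  exact rk.injective (le_antisymm (hi.2 j hj.1) (hj.2 i hi.1))

lemma exists_pickStep_sdiff_self_eq_singleton (hS : Sᶜ.Nonempty) :
    ∃ i ∈ Sᶜ, (∀ j ∈ Sᶜ, rk i ≤ rk j) ∧ pickStep rk S \ S = {i} := by
  obtain ⟨i, hi, hmin⟩ := Sᶜ.exists_min_image rk hS
  refine ⟨i, hi, hmin, ?_⟩
  rw [pickStep_sdiff_self]
  ext j
  simp only [mem_filter, mem_singleton]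
  constructor
  · rintro ⟨hj, hjmin⟩
    exact rk.injective (le_antisymm (hjmin i hi) (hmin j hj))
  · rintro rfl
    exact ⟨hi, hmin⟩

end PickStep

section Allocation

variable {A : Type*} {m : ℕ} (rpt : A → Fin m ≃ Fin m) (π : ℕ → A)

lemma card_pickedUpTo_le (t : ℕ) : (pickedUpTo rpt π t).card ≤ t := by
  induction t with
  | zero => simp [pickedUpTo]
  | succ t ih =>
    calc (pickedUpTo rpt π (t + 1)).card
        ≤ (pickStep (rpt (π t)) (pickedUpTo rpt π t) \ pickedUpTo rpt π t).card
            + (pickedUpTo rpt π t).card := card_le_card_sdiff_add_card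
      _ ≤ 1 + t := add_le_add (card_pickStep_sdiff_self_le_one _ _) ih
      _ = t + 1 := add_comm 1 t

lemma pickedUpTo_update_of_forall_lt_ne [DecidableEq A] {a : A} (r : Fin m ≃ Fin m) {t : ℕ}
    (h : ∀ s < t, π s ≠ a) :
    pickedUpTo (Function.update rpt a r) π t = pickedUpTo rpt π t := by
  induction t with
  | zero => rfl
  | succ t ih =>
    rw [pickedUpTo, pickedUpTo, ih fun s hs => h s (hs.trans t.lt_succ_self),
      Function.update_of_ne (h t t.lt_succ_self)]

lemma alloc_eq_of_turns_eq_singleton [DecidableEq A] {a : A} {t₀ : ℕ}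
    (hturn : (range m).filter (fun t => π t = a) = {t₀}) :
    alloc rpt π a = pickStep (rpt a) (pickedUpTo rpt π t₀) \ pickedUpTo rpt π t₀ := by
  have hturn' := filter_range_eq_singleton_iff.mp hturn
  ext i
  simp only [alloc, mem_biUnion, mem_range]
  constructor
  · rintro ⟨t, ht, hi⟩
    split_ifs at hi with hπ
    · obtain rfl := (hturn' t).mp ⟨ht, hπ⟩
      rwa [pickedUpTo, hπ] at hi
    · simp at hi
  · intro hi
    obtain ⟨ht₀, hπ⟩ := (hturn' t₀).mpr rfl
    refine ⟨t₀, ht₀, ?_⟩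
    rwa [if_pos hπ, pickedUpTo, hπ]

end Allocation

lemma le_of_rank_le {α β γ : Type*} [LinearOrder β] [Preorder γ] {rk : α → β}
    (hrk : Function.Injective rk) {u : α → γ} (hT : ∀ i j, rk i < rk j → u j < u i) {i j : α}
    (h : rk i ≤ rk j) : u j ≤ u i := by
  rcases h.lt_or_eq with hlt | heq
  · exact (hT i j hlt).le
  · rw [hrk heq]

theorem statement15_general {A : Type*} [DecidableEq A] {m : ℕ} (a₁ : A)
    (rk : A → Fin m ≃ Fin m) (π : ℕ → A) (u : Fin m → ℝ)
    (hT : ∀ i j, rk a₁ i < rk a₁ j ↔ u j < u i)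
    (hμ : ((Finset.range m).filter fun t => π t = a₁).card = 1)
    (r : Fin m ≃ Fin m) :
    ∑ i ∈ alloc (Function.update rk a₁ r) π a₁, u i
      ≤ ∑ i ∈ alloc rk π a₁, u i := by
  obtain ⟨t₀, hturn⟩ := card_eq_one.mp hμ
  have hturn' := filter_range_eq_singleton_iff.mp hturn
  obtain ⟨ht₀, -⟩ := (hturn' t₀).mpr rfl
  have hprefix : pickedUpTo (Function.update rk a₁ r) π t₀ = pickedUpTo rk π t₀ :=
    pickedUpTo_update_of_forall_lt_ne rk π r fun s hs hπ =>
      hs.ne ((hturn' s).mp ⟨hs.trans ht₀, hπ⟩)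
  set C := pickedUpTo rk π t₀
  have hC : Cᶜ.Nonempty := by
    have hcard : C.card ≤ t₀ := card_pickedUpTo_le rk π t₀
    rw [← card_pos, card_compl, Fintype.card_fin]
    omega
  obtain ⟨i, -, hi_min, hi⟩ := exists_pickStep_sdiff_self_eq_singleton (rk a₁) C hC
  obtain ⟨j, hjC, -, hj⟩ := exists_pickStep_sdiff_self_eq_singleton r C hC
  rw [alloc_eq_of_turns_eq_singleton _ _ hturn, alloc_eq_of_turns_eq_singleton _ _ hturn,
    Function.update_self, hprefix, hi, hj, sum_singleton, sum_singleton]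
  exact le_of_rank_le (rk a₁).injective (fun i j => (hT i j).mp) (hi_min j hjC)

/-- if the manipulator picks exactly once (`μ(a₁) = 1`), then she
cannot manipulate: for every ranking `r` she reports, `u(φ_r(a₁)) ≤ u_T`.
Here `rk` are the truthful rankings, `u` is the manipulator's injective positive
utility function, consistent with her truthful ranking
(`rk a₁ i < rk a₁ j ↔ u j < u i`), and `u_T` is the utility of her bundle when
reporting truthfully. -/
theorem statement15 {A : Type*} [DecidableEq A] {m : ℕ} (a₁ : A)
    (rk : A → Fin m ≃ Fin m) (π : ℕ → A) (u : Fin m → ℝ)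
    (hpos : ∀ i, 0 < u i) (hinj : Function.Injective u)
    (hT : ∀ i j, rk a₁ i < rk a₁ j ↔ u j < u i)
    (hμ : ((Finset.range m).filter fun t => π t = a₁).card = 1)
    (r : Fin m ≃ Fin m) :
    ∑ i ∈ alloc (Function.update rk a₁ r) π a₁, u i
      ≤ ∑ i ∈ alloc rk π a₁, u i :=
  statement15_general a₁ rk π u hT hμ r
end
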